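/- arXiv:2404.01215 — 2 statements merged into one kernel-verified Lean document; each statement's English description precedes it below -/
import Mathlib

section
/- Let ω = e^{2πi/3}, let u, v ∈ ℝ, and let k ∈ ℂ with k ≠ 0. Let P(k) = [[ωk, ω²k, k], [ω²k², ωk², k²], [1, 1, 1]], let L̃ = [[−u/3, −1, 0], [−v, 2u/3, −k³], [−1, 0, −u/3]], and let J = diag(ω, ω², 1). Then P(k)^{-1} L̃ P(k) = −k·J + U^{(0)} + (1/k)·U^{(−1)}, where U^{(0)} = (u/3)·[[0, ω², ω], [ω, 0, ω²], [ω², ω, 0]] and U^{(−1)} = −(v/3)·[[ω², 1, ω], [1, ω, ω²], [ω, ω², 1]]. -/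
open Matrix

/-- ω = e^{2πi/3}, a primitive cube root of unity. -/
noncomputable def ω : ℂ := Complex.exp (2 * Real.pi * Complex.I / 3)

/-- The gauge-transformation matrix P(k). -/
noncomputable def Pmat (k : ℂ) : Matrix (Fin 3) (Fin 3) ℂ :=
  !![ω * k, ω^2 * k, k;
     ω^2 * k^2, ω * k^2, k^2;
     1, 1, 1]

/-- The diagonal matrix J = diag(ω, ω², 1). -/
noncomputable def Jmat : Matrix (Fin 3) (Fin 3) ℂ := Matrix.diagonal ![ω, ω^2, 1]

/-- The spatial Lax matrix L̃ with spectral parameter λ = k³. -/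
noncomputable def Ltilde (u v : ℝ) (k : ℂ) : Matrix (Fin 3) (Fin 3) ℂ :=
  !![-(u : ℂ)/3, -1, 0;
     -(v : ℂ), 2*(u : ℂ)/3, -k^3;
     -1, 0, -(u : ℂ)/3]

/-- U⁽⁰⁾. -/
noncomputable def U0 (u : ℝ) : Matrix (Fin 3) (Fin 3) ℂ :=
  ((u : ℂ)/3) • !![0, ω^2, ω; ω, 0, ω^2; ω^2, ω, 0]

/-- U⁽⁻¹⁾. -/
noncomputable def Um1 (v : ℝ) : Matrix (Fin 3) (Fin 3) ℂ :=
  (-(v : ℂ)/3) • !![ω^2, 1, ω; 1, ω, ω^2; ω, ω^2, 1]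

lemma ω_prim : IsPrimitiveRoot ω 3 := by
  have := Complex.isPrimitiveRoot_exp 3 (by norm_num)
  simpa [ω, mul_comm, mul_assoc, mul_left_comm] using this

lemma ω_cube : ω ^ 3 = 1 := ω_prim.pow_eq_one

lemma ω_ne_one : ω ≠ 1 := ω_prim.ne_one (by norm_num)

lemma ω_ne_zero : ω ≠ 0 := ω_prim.ne_zero (by norm_num)

lemma ω_sum : 1 + ω + ω ^ 2 = 0 := by
  have h : (ω - 1) * (1 + ω + ω ^ 2) = 0 := by linear_combination ω_cube
  rcases mul_eq_zero.mp h with h1 | h2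
  · exact absurd (sub_eq_zero.mp h1) ω_ne_one
  · exact h2

lemma Jmat_explicit : Jmat = !![ω, 0, 0; 0, ω^2, 0; 0, 0, 1] := by
  ext i j
  fin_cases i <;> fin_cases j <;>
    simp [Jmat, Matrix.diagonal_apply, Fin.ext_iff, Matrix.vecHead, Matrix.vecTail]

/-- Conjugation of L̃ by P(k): P(k)⁻¹ L̃ P(k) = −kJ + U⁽⁰⁾ + (1/k)U⁽⁻¹⁾. -/
theorem Pinv_Ltilde_P (u v : ℝ) (k : ℂ) (hk : k ≠ 0) :
    (Pmat k)⁻¹ * Ltilde u v k * Pmat k = (-k) • Jmat + U0 u + k⁻¹ • Um1 v := by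
  have hs := ω_sum
  have hki : k⁻¹ * k = 1 := inv_mul_cancel₀ hk
  have hne : (ω ^ 2 - ω) ≠ 0 := by
    intro h
    have h' : ω * (ω - 1) = 0 := by linear_combination h
    rcases mul_eq_zero.mp h' with h1 | h2
    · exact ω_ne_zero h1
    · exact ω_ne_one (sub_eq_zero.mp h2)
  have hdet : (Pmat k).det = 3 * k ^ 3 * (ω ^ 2 - ω) := by
    simp [Pmat, Matrix.det_fin_three]
    linear_combination (-(k ^ 3) * ω) * ω_cube
  have hunit : IsUnit (Pmat k).det := by
    rw [hdet]
    exact isUnit_iff_ne_zero.mpr (by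
      exact mul_ne_zero (mul_ne_zero (by norm_num) (pow_ne_zero _ hk)) hne)
  have hR : (-k) • Jmat + U0 u + k⁻¹ • Um1 v =
      !![-k*ω + k⁻¹*(-(v:ℂ)/3)*ω^2, ((u:ℂ)/3)*ω^2 + k⁻¹*(-(v:ℂ)/3), ((u:ℂ)/3)*ω + k⁻¹*(-(v:ℂ)/3)*ω;
         ((u:ℂ)/3)*ω + k⁻¹*(-(v:ℂ)/3), -k*ω^2 + k⁻¹*(-(v:ℂ)/3)*ω, ((u:ℂ)/3)*ω^2 + k⁻¹*(-(v:ℂ)/3)*ω^2;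
         ((u:ℂ)/3)*ω^2 + k⁻¹*(-(v:ℂ)/3)*ω, ((u:ℂ)/3)*ω + k⁻¹*(-(v:ℂ)/3)*ω^2, -k + k⁻¹*(-(v:ℂ)/3)] := by
    rw [Jmat_explicit, U0, Um1]
    ext i j
    fin_cases i <;> fin_cases j <;> simp <;> ring
  have key : Ltilde u v k * Pmat k = Pmat k * ((-k) • Jmat + U0 u + k⁻¹ • Um1 v) := by
    rw [hR, Ltilde, Pmat, Matrix.mul_fin_three, Matrix.mul_fin_three]
    refine congrArg Matrix.of (Matrix.vec3_eq (Matrix.vec3_eq ?_ ?_ ?_)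
      (Matrix.vec3_eq ?_ ?_ ?_) (Matrix.vec3_eq ?_ ?_ ?_))
    · linear_combination ((-1/3)*ω*k*(u:ℂ) + (1/3)*ω*k⁻¹*k*(v:ℂ)) * hs
    · linear_combination ((-1/3)*ω*k*(u:ℂ) + (-1)*ω*k^2 + (1/3)*ω*k⁻¹*k*(v:ℂ) + ω^2*k^2) * hs
    · linear_combination ((-1/3)*k*(u:ℂ) + (1/3)*k⁻¹*k*(v:ℂ) + (1/3)*ω*k*(u:ℂ) +
        (-1/3)*ω*k⁻¹*k*(v:ℂ) + (-1/3)*ω^2*k*(u:ℂ) + (1/3)*ω^2*k⁻¹*k*(v:ℂ)) * hs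
    · linear_combination ((-1)*k^3 + ω*k^3 + (-1/3)*ω*k⁻¹*k^2*(v:ℂ) +
        (1/3)*ω^2*k⁻¹*k^2*(v:ℂ)) * hs + (ω*k*(v:ℂ)) * hki
    · linear_combination ((-1)*k*(v:ℂ) + (-1)*k^3 + k⁻¹*k^2*(v:ℂ) + (1/3)*ω*k^2*(u:ℂ) +
        ω*k^3 + (-1/3)*ω^2*k^2*(u:ℂ)) * hs + ((-1)*k*(v:ℂ) + (-1)*ω*k*(v:ℂ)) * hki
    · linear_combination ((2/3)*k^2*(u:ℂ) + (-2/3)*k⁻¹*k^2*(v:ℂ) + (-2/3)*ω*k^2*(u:ℂ) +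
        (2/3)*ω*k⁻¹*k^2*(v:ℂ)) * hs + (k*(v:ℂ)) * hki
    · linear_combination ((-1/3)*(u:ℂ) + (1/3)*k⁻¹*(v:ℂ)) * hs
    · linear_combination ((-1/3)*(u:ℂ) + (1/3)*k⁻¹*(v:ℂ)) * hs
    · linear_combination ((-1/3)*(u:ℂ) + (1/3)*k⁻¹*(v:ℂ)) * hs
  rw [mul_assoc, key, ← mul_assoc, Matrix.nonsing_inv_mul _ hunit, one_mul]
end

section
/- Let ω = e^{2πi/3}, let u, v, u_x, u_{xx}, v_x ∈ ℝ (denoting the values of a function and its derivatives at a point), and let k ∈ ℂ with k ≠ 0. Let P(k) = [[ωk, ω²k, k], [ω²k², ωk², k²], [1, 1, 1]], let Z̃ = (1/3)·[[v − u_x − u²/3, −u, 3k³], [2u_{xx} − 3v_x − uv + 3k³, 2u²/3 + v, −k³u], [2u, 3, u_x − 2v − u²/3]], and let J = diag(ω, ω², 1). Then P(k)^{-1} Z̃ P(k) = k²·J² + k·V^{(1)} + V^{(0)} + (1/k)·V^{(−1)}, where V^{(1)} = (u/3)·[[0, ω², 1], [ω, 0, 1], [ω, ω², 0]], V^{(−1)}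 = ((2u_{xx} − uv − 3v_x)/9)·[[ω², 1, ω], [1, ω, ω²], [ω, ω², 1]], and V^{(0)} = (1/9)·[[0, ω²u² + (1−ω)u_x − 3v, ωu² + (ω+2)u_x − 3v], [ωu² − 3v + (ω+2)u_x, 0, ω²u² + (1−ω)u_x − 3v], [ω²u² − 3v + (1−ω)u_x, ωu² − 3v + (ω+2)u_x, 0]]. -/
open Matrix

/-- The temporal Lax matrix Z̃ with spectral parameter λ = k³, where
`u, v, ux, uxx, vx` denote the values of the fields and their derivatives at a point. -/
noncomputable def Ztilde (u v ux uxx vx : ℝ) (k : ℂ) : Matrix (Fin 3) (Fin 3) ℂ :=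
  (1/3 : ℂ) •
  !![(v : ℂ) - (ux : ℂ) - (u : ℂ)^2/3, -(u : ℂ), 3*k^3;
     2*(uxx : ℂ) - 3*(vx : ℂ) - (u : ℂ)*(v : ℂ) + 3*k^3, 2*(u : ℂ)^2/3 + (v : ℂ), -k^3*(u : ℂ);
     2*(u : ℂ), 3, (ux : ℂ) - 2*(v : ℂ) - (u : ℂ)^2/3]

/-- V⁽¹⁾. -/
noncomputable def V1 (u : ℝ) : Matrix (Fin 3) (Fin 3) ℂ :=
  ((u : ℂ)/3) • !![0, ω^2, 1; ω, 0, 1; ω, ω^2, 0]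

/-- V⁽⁻¹⁾. -/
noncomputable def Vm1 (u v uxx vx : ℝ) : Matrix (Fin 3) (Fin 3) ℂ :=
  (((2*uxx - u*v - 3*vx : ℝ) : ℂ)/9) • !![ω^2, 1, ω; 1, ω, ω^2; ω, ω^2, 1]

/-- V⁽⁰⁾. -/
noncomputable def V0 (u v ux : ℝ) : Matrix (Fin 3) (Fin 3) ℂ :=
  (1/9 : ℂ) •
  !![0, ω^2*(u : ℂ)^2 + (1-ω)*(ux : ℂ) - 3*(v : ℂ), ω*(u : ℂ)^2 + (ω+2)*(ux : ℂ) - 3*(v : ℂ);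
     ω*(u : ℂ)^2 - 3*(v : ℂ) + (ω+2)*(ux : ℂ), 0, ω^2*(u : ℂ)^2 + (1-ω)*(ux : ℂ) - 3*(v : ℂ);
     ω^2*(u : ℂ)^2 - 3*(v : ℂ) + (1-ω)*(ux : ℂ), ω*(u : ℂ)^2 - 3*(v : ℂ) + (ω+2)*(ux : ℂ), 0]

set_option maxHeartbeats 3200000 in
set_option linter.unusedTactic false in
/-- Conjugation of Z̃ by P(k): P(k)⁻¹ Z̃ P(k) = k²J² + kV⁽¹⁾ + V⁽⁰⁾ + (1/k)V⁽⁻¹⁾. -/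
theorem Pinv_Ztilde_P (u v ux uxx vx : ℝ) (k : ℂ) (hk : k ≠ 0) :
    (Pmat k)⁻¹ * Ztilde u v ux uxx vx k * Pmat k
      = k^2 • Jmat^2 + k • V1 u + V0 u v ux + k⁻¹ • Vm1 u v uxx vx := by
  have hprim : IsPrimitiveRoot ω 3 := by
    have := Complex.isPrimitiveRoot_exp 3 (by norm_num)
    simpa [ω] using this
  have hω1 : ω ≠ 1 := hprim.ne_one (by norm_num)
  have hω3 : ω ^ 3 = 1 := hprim.pow_eq_one
  have hw2 : ω ^ 2 + ω + 1 = 0 := by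
    have h : (ω - 1) * (ω ^ 2 + ω + 1) = 0 := by linear_combination hω3
    rcases mul_eq_zero.mp h with h' | h'
    · exact absurd (sub_eq_zero.mp h') hω1
    · exact h'
  have hω0 : ω ≠ 0 := hprim.ne_zero (by norm_num)
  have hωne : ω - ω ^ 2 ≠ 0 := by
    intro h
    have h2 : ω * (1 - ω) = 0 := by linear_combination h
    rcases mul_eq_zero.mp h2 with h' | h'
    · exact hω0 h'
    · exact hω1 (by linear_combination -h')
  have hdet : (Pmat k).det = -3 * k ^ 3 * (ω - ω ^ 2) := by
    simp [Pmat, Matrix.det_fin_three]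
    linear_combination (-ω * k ^ 3) * hω3
  have hunit : IsUnit (Pmat k).det := by
    rw [hdet]
    refine isUnit_iff_ne_zero.mpr ?_
    intro h
    rcases mul_eq_zero.mp h with h' | h'
    · rcases mul_eq_zero.mp h' with h'' | h''
      · norm_num at h''
      · exact pow_ne_zero 3 hk h''
    · exact hωne h'
  have hkK : k * k⁻¹ = 1 := mul_inv_cancel₀ hk
  have hJ2 : Jmat ^ 2 = !![ω^2, 0, 0; 0, ω^4, 0; 0, 0, 1] := by
    rw [pow_two, Jmat, Matrix.diagonal_mul_diagonal]
    ext i j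
    fin_cases i <;> fin_cases j <;>
      simp [Matrix.diagonal_apply, Matrix.vecHead, Matrix.vecTail] <;> ring
  have key : Ztilde u v ux uxx vx k * Pmat k
      = Pmat k * (k^2 • Jmat^2 + k • V1 u + V0 u v ux + k⁻¹ • Vm1 u v uxx vx) := by
    rw [hJ2]
    ext i j
    fin_cases i <;> fin_cases j <;>
      simp [Ztilde, Pmat, V1, V0, Vm1, Matrix.mul_apply, Fin.sum_univ_three,
        Matrix.vecHead, Matrix.vecTail] <;> push_cast [] 
    · linear_combination ((-1/9:ℂ)*k*(ux:ℂ) + (1/3:ℂ)*k*(v:ℂ) + k^3 + (1/3:ℂ)*ω*(vx:ℂ) + (-2/9:ℂ)*ω*(uxx:ℂ) + (1/9:ℂ)*ω*(u:ℂ)*(v:ℂ) + (-1/9:ℂ)*ω*k*(ux:ℂ) + (-1/9:ℂ)*ω*k*(u:ℂ)^2 + (-1/3:ℂ)*ω*k^2*(u:ℂ) + (-1:ℂ)*ω*k^3) * hw2 + ((1/3:ℂ)*ω*(vx:ℂ) + (-2/9:ℂ)*ω*(uxx:ℂ) + (1/9:ℂ)*ω*(u:ℂ)*(v:ℂ) +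 (1/3:ℂ)*ω^2*(vx:ℂ) + (-2/9:ℂ)*ω^2*(uxx:ℂ) + (1/9:ℂ)*ω^2*(u:ℂ)*(v:ℂ) + (1/3:ℂ)*ω^3*(vx:ℂ) + (-2/9:ℂ)*ω^3*(uxx:ℂ) + (1/9:ℂ)*ω^3*(u:ℂ)*(v:ℂ)) * hkK
    · linear_combination ((-2/9:ℂ)*k*(ux:ℂ) + (1/3:ℂ)*k*(v:ℂ) + k^3 + (1/3:ℂ)*ω*(vx:ℂ) + (-2/9:ℂ)*ω*(uxx:ℂ) + (1/9:ℂ)*ω*(u:ℂ)*(v:ℂ) + (-1/9:ℂ)*ω*k*(u:ℂ)^2 + (-1/3:ℂ)*ω*k^2*(u:ℂ) + (-1:ℂ)*ω*k^3 + ω^3*k^3 + (-1:ℂ)*ω^4*k^3) * hw2 + ((1/3:ℂ)*ω*(vx:ℂ) + (-2/9:ℂ)*ω*(uxx:ℂ) + (1/9:ℂ)*ω*(u:ℂ)*(v:ℂ) + (1/3:ℂ)*ω^2*(vx:ℂ) + (-2/9:ℂ)*ω^2*(uxx:ℂ) + (1/9:ℂ)*ω^2*(u:ℂ)*(v:ℂ)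 + (1/3:ℂ)*ω^3*(vx:ℂ) + (-2/9:ℂ)*ω^3*(uxx:ℂ) + (1/9:ℂ)*ω^3*(u:ℂ)*(v:ℂ)) * hkK
    · linear_combination ((1/3:ℂ)*(vx:ℂ) + (-2/9:ℂ)*(uxx:ℂ) + (1/9:ℂ)*(u:ℂ)*(v:ℂ) + (-1/3:ℂ)*k*(ux:ℂ) + (1/3:ℂ)*k*(v:ℂ) + (-1/9:ℂ)*k*(u:ℂ)^2 + (-1/3:ℂ)*k^2*(u:ℂ) + (-1/3:ℂ)*ω*(vx:ℂ) + (2/9:ℂ)*ω*(uxx:ℂ) + (-1/9:ℂ)*ω*(u:ℂ)*(v:ℂ) + (1/9:ℂ)*ω*k*(ux:ℂ) + (1/9:ℂ)*ω*k*(u:ℂ)^2 + (1/3:ℂ)*ω^2*(vx:ℂ) + (-2/9:ℂ)*ω^2*(uxx:ℂ) + (1/9:ℂ)*ω^2*(u:ℂ)*(v:ℂ) + (-1/9:ℂ)*ω^2*k*(u:ℂ)^2) * hw2 + ((1/3:ℂ)*(vx:ℂ) + (-2/9:ℂ)*(uxx:ℂ) + (1/9:ℂ)*(u:ℂ)*(v:ℂ)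 + (1/3:ℂ)*ω^2*(vx:ℂ) + (-2/9:ℂ)*ω^2*(uxx:ℂ) + (1/9:ℂ)*ω^2*(u:ℂ)*(v:ℂ) + (1/3:ℂ)*ω^4*(vx:ℂ) + (-2/9:ℂ)*ω^4*(uxx:ℂ) + (1/9:ℂ)*ω^4*(u:ℂ)*(v:ℂ)) * hkK
    · linear_combination ((-1/9:ℂ)*k^2*(ux:ℂ) + (1/3:ℂ)*k^2*(v:ℂ) + (-1/3:ℂ)*k^3*(u:ℂ) + (-1/3:ℂ)*ω*k*(vx:ℂ) + (2/9:ℂ)*ω*k*(uxx:ℂ) + (-1/9:ℂ)*ω*k*(u:ℂ)*(v:ℂ) + ω*k^4 + (1/3:ℂ)*ω^2*k*(vx:ℂ) + (-2/9:ℂ)*ω^2*k*(uxx:ℂ) + (1/9:ℂ)*ω^2*k*(u:ℂ)*(v:ℂ) + (-1:ℂ)*ω^2*k^4) * hw2 + ((2/3:ℂ)*ω*k*(vx:ℂ) + (-4/9:ℂ)*ω*k*(uxx:ℂ) + (2/9:ℂ)*ω*k*(u:ℂ)*(v:ℂ) + (1/3:ℂ)*ω^4*k*(vx:ℂ) + (-2/9:ℂ)*ω^4*k*(uxx:ℂ)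 + (1/9:ℂ)*ω^4*k*(u:ℂ)*(v:ℂ)) * hkK
    · linear_combination ((-2/9:ℂ)*k^2*(ux:ℂ) + (1/3:ℂ)*k^2*(v:ℂ) + (-1/3:ℂ)*k^3*(u:ℂ) + (1/9:ℂ)*ω*k^2*(ux:ℂ) + (1/9:ℂ)*ω*k^2*(u:ℂ)^2 + (1/3:ℂ)*ω*k^3*(u:ℂ) + (-1/9:ℂ)*ω^2*k^2*(u:ℂ)^2 + (-1/3:ℂ)*ω^2*k^3*(u:ℂ) + ω^2*k^4 + (-1:ℂ)*ω^3*k^4) * hw2 + (ω^2*k*(vx:ℂ) + (-2/3:ℂ)*ω^2*k*(uxx:ℂ) + (1/3:ℂ)*ω^2*k*(u:ℂ)*(v:ℂ)) * hkK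
    · linear_combination ((-2/3:ℂ)*k*(vx:ℂ) + (4/9:ℂ)*k*(uxx:ℂ) + (-2/9:ℂ)*k*(u:ℂ)*(v:ℂ) + (1/3:ℂ)*k^2*(v:ℂ) + (2/9:ℂ)*k^2*(u:ℂ)^2 + (-1/3:ℂ)*k^3*(u:ℂ) + (2/3:ℂ)*ω*k*(vx:ℂ) + (-4/9:ℂ)*ω*k*(uxx:ℂ) + (2/9:ℂ)*ω*k*(u:ℂ)*(v:ℂ) + (-1/9:ℂ)*ω*k^2*(ux:ℂ) + (-2/9:ℂ)*ω*k^2*(u:ℂ)^2) * hw2 + ((1/3:ℂ)*k*(vx:ℂ) + (-2/9:ℂ)*k*(uxx:ℂ) + (1/9:ℂ)*k*(u:ℂ)*(v:ℂ) + (2/3:ℂ)*ω^3*k*(vx:ℂ) + (-4/9:ℂ)*ω^3*k*(uxx:ℂ) + (2/9:ℂ)*ω^3*k*(u:ℂ)*(v:ℂ)) * hkK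
    · linear_combination ((-1/9:ℂ)*(u:ℂ)^2 + (1/3:ℂ)*k⁻¹*(vx:ℂ) + (-2/9:ℂ)*k⁻¹*(uxx:ℂ) + (1/9:ℂ)*k⁻¹*(u:ℂ)*(v:ℂ)) * hw2 + (0) * hkK
    · linear_combination ((-1/9:ℂ)*(u:ℂ)^2 + (1/3:ℂ)*k⁻¹*(vx:ℂ) + (-2/9:ℂ)*k⁻¹*(uxx:ℂ) + (1/9:ℂ)*k⁻¹*(u:ℂ)*(v:ℂ) + ω*k^2 + (-1:ℂ)*ω^2*k^2) * hw2 + (0) * hkK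
    · linear_combination ((-1/9:ℂ)*(u:ℂ)^2 + (1/3:ℂ)*k⁻¹*(vx:ℂ) + (-2/9:ℂ)*k⁻¹*(uxx:ℂ) + (1/9:ℂ)*k⁻¹*(u:ℂ)*(v:ℂ)) * hw2 + (0) * hkK
  calc (Pmat k)⁻¹ * Ztilde u v ux uxx vx k * Pmat k
      = (Pmat k)⁻¹ * (Ztilde u v ux uxx vx k * Pmat k) := by rw [mul_assoc]
    _ = (Pmat k)⁻¹ * (Pmat k * (k^2 • Jmat^2 + k • V1 u + V0 u v ux + k⁻¹ • Vm1 u v uxx vx)) := by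
        rw [key]
    _ = _ := by rw [← mul_assoc, Matrix.nonsing_inv_mul _ hunit, one_mul]
end
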